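/- arXiv:2507.15102 — 2 statements merged into one kernel-verified Lean document; each statement's English description precedes it below -/
import Mathlib

section
/- Let E ⊆ ℝⁿ be a bounded measurable set and 𝓕 a family of measurable functions on E (extended by zero to ℝⁿ). If 𝓕 is almost equicontinuous, then for each ε > 0 there exists r > 0 such that ∫_{ℝⁿ} min(|f(x+y) − f(x)|,1) dx < ε for every |y| < r and all f ∈ 𝓕. -/
open MeasureTheory ENNReal

/-- Almost equicontinuity of a family of functions on a set E. -/
def AlmostEquicontinuous {n : ℕ} (E : Set (EuclideanSpace ℝ (Fin n)))
    (F : Set (EuclideanSpace ℝ (Fin n) → ℝ)) : Prop :=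
  ∀ ε > (0 : ℝ), ∃ δ > (0 : ℝ), ∀ f ∈ F, ∃ B ⊆ E,
    volume B < ENNReal.ofReal ε ∧
    ∀ x₁ ∈ E \ B, ∀ x₂ ∈ E \ B, ‖x₁ - x₂‖ < δ → |f x₁ - f x₂| < ε

/-!
Off the exceptional set `B` of almost equicontinuity, its translate `B - y`, and the symmetric
difference `(E - y) ∆ E`, the integrand is below `η` on `E` and vanishes off `E`; on those three sets
it is at most `1`. Translation invariance bounds `|B - y|` by `|B| < η`, and continuity of
translation in measure makes `|(E - y) ∆ E|` small for small `y`.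
-/

open Filter Set
open scoped symmDiff Topology

namespace MeasureTheory

variable {G : Type*}

theorem tendsto_measure_preimage_add_right_symmDiff_nhds_zero [MeasurableSpace G] [AddGroup G]
    [TopologicalSpace G] [IsTopologicalAddGroup G] [BorelSpace G] {μ : Measure G}
    [μ.InnerRegularCompactLTTop] [IsLocallyFiniteMeasure μ] [μ.IsAddRightInvariant]
    {s : Set G} (hs : MeasurableSet s) (hμs : μ s ≠ ∞) :
    Tendsto (fun y ↦ μ (((· + y) ⁻¹' s) ∆ s)) (𝓝 0) (𝓝 0) := by
  let translate : C(G, C(G, G)) := ContinuousMap.curry ⟨fun p ↦ p.2 + p.1, by fun_prop⟩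
  have hmp (y : G) : MeasurePreserving (translate y) μ μ := measurePreserving_add_right μ y
  have h := tendsto_measure_symmDiff_preimage_nhds_zero
    (translate.continuous.tendsto 0) (.of_forall hmp) (hmp 0) hs.nullMeasurableSet hμs
  have htranslate (y : G) : ⇑(translate y) = (· + y) := rfl
  simpa only [htranslate, add_zero, preimage_id'] using h

theorem ofReal_min_abs_sub_one_le_indicator_add_indicator [Add G] {f : G → ℝ} {E B : Set G}
    (hf : ∀ x ∉ E, f x = 0) {y : G} {η : ℝ}
    (hgood : ∀ x ∈ E \ B, x + y ∈ E \ B → |f (x + y) - f x| < η) (x : G) :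
    ENNReal.ofReal (min |f (x + y) - f x| 1) ≤
      E.indicator (fun _ ↦ ENNReal.ofReal η) x +
        (((· + y) ⁻¹' E) ∆ E ∪ B ∪ (· + y) ⁻¹' B).indicator (fun _ ↦ 1) x := by
  by_cases hbad : x ∈ ((· + y) ⁻¹' E) ∆ E ∪ B ∪ (· + y) ⁻¹' B
  · rw [indicator_of_mem hbad]
    exact le_add_left (ENNReal.ofReal_le_one.2 (min_le_right _ _))
  simp only [mem_union, mem_symmDiff, mem_preimage, not_or, not_and, not_not] at hbad
  obtain ⟨⟨⟨hxyE, hxE⟩, hxB⟩, hxyB⟩ := hbad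
  by_cases hx : x ∈ E
  · rw [indicator_of_mem hx]
    refine le_add_right (ENNReal.ofReal_le_ofReal ((min_le_left _ _).trans ?_))
    exact (hgood x ⟨hx, hxB⟩ ⟨hxE hx, hxyB⟩).le
  · simp [hf x hx, hf (x + y) (fun h ↦ hx (hxyE h))]

theorem lintegral_ofReal_min_abs_sub_one_le [MeasurableSpace G] [AddGroup G] [MeasurableAdd G]
    (μ : Measure G) [μ.IsAddRightInvariant] {f : G → ℝ} {E B : Set G} (hE : MeasurableSet E)
    (hf : ∀ x ∉ E, f x = 0) {y : G} {η : ℝ}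
    (hgood : ∀ x ∈ E \ B, x + y ∈ E \ B → |f (x + y) - f x| < η) :
    ∫⁻ x, ENNReal.ofReal (min |f (x + y) - f x| 1) ∂μ ≤
      ENNReal.ofReal η * μ E + μ (((· + y) ⁻¹' E) ∆ E) + 2 * μ B := by
  calc ∫⁻ x, ENNReal.ofReal (min |f (x + y) - f x| 1) ∂μ
      ≤ ∫⁻ x, E.indicator (fun _ ↦ ENNReal.ofReal η) x ∂μ +
          ∫⁻ x, (((· + y) ⁻¹' E) ∆ E ∪ B ∪ (· + y) ⁻¹' B).indicator (fun _ ↦ 1) x ∂μ := by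
        rw [← lintegral_add_left (measurable_const.indicator hE)]
        exact lintegral_mono (ofReal_min_abs_sub_one_le_indicator_add_indicator hf hgood)
    _ ≤ ENNReal.ofReal η * μ E + 1 * μ (((· + y) ⁻¹' E) ∆ E ∪ B ∪ (· + y) ⁻¹' B) := by
        rw [lintegral_indicator_const hE]
        gcongr
        exact lintegral_indicator_const_le _ _
    _ ≤ ENNReal.ofReal η * μ E + (μ (((· + y) ⁻¹' E) ∆ E) + μ B + μ ((· + y) ⁻¹' B)) := by
        rw [one_mul]
        gcongr
        exact (measure_union_le _ _).trans (by gcongr; exact measure_union_le _ _)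
    _ = ENNReal.ofReal η * μ E + μ (((· + y) ⁻¹' E) ∆ E) + 2 * μ B := by
        rw [measure_preimage_add_right, two_mul]
        ring

end MeasureTheory

theorem almostEquicontinuous_translation_general {n : ℕ}
    (E : Set (EuclideanSpace ℝ (Fin n))) (hE : MeasurableSet E)
    (hEbd : Bornology.IsBounded E)
    (F : Set (EuclideanSpace ℝ (Fin n) → ℝ))
    (hsupp : ∀ f ∈ F, ∀ x ∉ E, f x = 0)
    (heq : AlmostEquicontinuous E F) :
    ∀ ε > (0 : ℝ), ∃ r > (0 : ℝ), ∀ y : EuclideanSpace ℝ (Fin n), ‖y‖ < r →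
      ∀ f ∈ F,
      (∫⁻ x, ENNReal.ofReal (min |f (x + y) - f x| 1)) < ENNReal.ofReal ε := by
  intro ε hε
  have hEfin : volume E ≠ ∞ := hEbd.measure_lt_top.ne
  have hε2 : ENNReal.ofReal ε / 2 ≠ 0 := by simpa using hε
  obtain ⟨η, hη, hηE⟩ := exists_nnreal_pos_mul_lt (b := ENNReal.ofReal ε / 2)
    (add_ne_top.2 ⟨hEfin, ofNat_ne_top (n := 2)⟩) hε2
  obtain ⟨δ, hδ, hδF⟩ := heq η hη
  obtain ⟨r, hr, hrE⟩ := Metric.eventually_nhds_iff.1 <|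
    (tendsto_measure_preimage_add_right_symmDiff_nhds_zero hE hEfin).eventually
      (gt_mem_nhds (pos_iff_ne_zero.2 hε2))
  refine ⟨min δ r, lt_min hδ hr, fun y hy f hf ↦ ?_⟩
  obtain ⟨B, -, hB, hBgood⟩ := hδF f hf
  have hgood (x) (hx : x ∈ E \ B) (hxy : x + y ∈ E \ B) : |f (x + y) - f x| < η :=
    hBgood _ hxy _ hx (by simpa using hy.trans_le (min_le_left _ _))
  have hΔ := hrE (by simpa using hy.trans_le (min_le_right _ _))
  calc ∫⁻ x, ENNReal.ofReal (min |f (x + y) - f x| 1)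
      ≤ ENNReal.ofReal η * volume E + volume (((· + y) ⁻¹' E) ∆ E) + 2 * volume B :=
        lintegral_ofReal_min_abs_sub_one_le volume hE (hsupp f hf) hgood
    _ ≤ (η : ℝ≥0∞) * (volume E + 2) + volume (((· + y) ⁻¹' E) ∆ E) := by
        rw [ofReal_coe_nnreal] at hB
        rw [ofReal_coe_nnreal, mul_add, add_right_comm, mul_comm (η : ℝ≥0∞) 2]
        gcongr
    _ < ENNReal.ofReal ε / 2 + ENNReal.ofReal ε / 2 := ENNReal.add_lt_add hηE hΔ
    _ = ENNReal.ofReal ε := ENNReal.add_halves _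

theorem almostEquicontinuous_translation {n : ℕ}
    (E : Set (EuclideanSpace ℝ (Fin n))) (hE : MeasurableSet E)
    (hEbd : Bornology.IsBounded E)
    (F : Set (EuclideanSpace ℝ (Fin n) → ℝ))
    (hmeas : ∀ f ∈ F, Measurable f)
    (hsupp : ∀ f ∈ F, ∀ x ∉ E, f x = 0)
    (heq : AlmostEquicontinuous E F) :
    ∀ ε > (0 : ℝ), ∃ r > (0 : ℝ), ∀ y : EuclideanSpace ℝ (Fin n), ‖y‖ < r →
      ∀ f ∈ F,
      (∫⁻ x, ENNReal.ofReal (min |f (x + y) - f x| 1)) < ENNReal.ofReal ε :=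
  almostEquicontinuous_translation_general E hE hEbd F hsupp heq
end

section
/- Let E ⊆ ℝⁿ be a bounded measurable set. If a family 𝓕 of measurable real-valued functions on E is totally bounded with respect to the F-seminorm f ↦ ∫_E min(|f|,1) dx, then 𝓕 is almost equicontinuous. -/
open MeasureTheory ENNReal

/-!
Choose a finite net `G` for the F-seminorm at a scale so small that, by Chebyshev's inequality,
each `f ∈ F` is `ε`-close to some `g ∈ G` off a subset of `E` of measure `< ε`. Each measurable
`g` is `ε`-close to a uniformly continuous function off a set of small measure (Lusin's theorem,
obtained by approximating `g` in measure by a simple function and that in `L¹` by a compactly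
supported continuous function), so `{g}` is almost equicontinuous, and so is the finite family
`G` (take the least `δ`). The triangle inequality transfers almost equicontinuity from `G` to `F`.
-/

namespace MeasureTheory

variable {X : Type*} [MeasurableSpace X] {μ : Measure X}

lemma measure_le_dist_le_add {E : Type*} [PseudoMetricSpace E] (f g h : X → E) (ε₁ ε₂ : ℝ) :
    μ {x | ε₁ + ε₂ ≤ dist (f x) (h x)} ≤
      μ {x | ε₁ ≤ dist (f x) (g x)} + μ {x | ε₂ ≤ dist (g x) (h x)} := by
  refine (measure_mono fun x hx => ?_).trans (measure_union_le _ _)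
  by_contra hx'
  simp only [Set.mem_union, Set.mem_ofPred_eq, not_or, not_le] at hx hx'
  linarith [dist_triangle (f x) (g x) (h x)]

lemma measure_le_abs_lt_of_lintegral_min_one_lt {φ : X → ℝ} (hφ : AEMeasurable φ μ)
    {ε : ℝ} (hε : 0 < ε)
    (hφε : ∫⁻ x, ENNReal.ofReal (min |φ x| 1) ∂μ < ENNReal.ofReal (min ε 1 * ε)) :
    μ {x | ε ≤ |φ x|} < ENNReal.ofReal ε := by
  have hmin : 0 < ENNReal.ofReal (min ε 1) := ofReal_pos.2 (by positivity)
  have hsub : {x | ε ≤ |φ x|} ⊆ {x | ENNReal.ofReal (min ε 1) ≤ ENNReal.ofReal (min |φ x| 1)} :=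
    fun x hx => ofReal_le_ofReal (min_le_min_right 1 hx)
  have hcheb := mul_meas_ge_le_lintegral₀
    (hφ.abs.min (aemeasurable_const (b := (1 : ℝ)))).ennreal_ofReal (ENNReal.ofReal (min ε 1))
  rw [ofReal_mul (by positivity)] at hφε
  refine (ENNReal.mul_lt_mul_iff_right hmin.ne' ofReal_ne_top).1 ?_
  exact ((mul_le_mul_right (measure_mono hsub) _).trans hcheb).trans_lt hφε

section Lusin

variable [MetricSpace X] [ProperSpace X] [BorelSpace X] [μ.Regular]
  {E : Type*} [NormedAddCommGroup E] [NormedSpace ℝ E]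

lemma Integrable.exists_uniformContinuous_measure_le_dist_le {g : X → E} (hg : Integrable g μ)
    {ε : ℝ} (hε : 0 < ε) :
    ∃ h : X → E, UniformContinuous h ∧ μ {x | ε ≤ dist (g x) (h x)} ≤ ENNReal.ofReal ε := by
  have hε' : 0 < ENNReal.ofReal ε := ofReal_pos.2 hε
  obtain ⟨h, hcs, hgh, hcont, -⟩ := hg.exists_hasCompactSupport_lintegral_sub_le
    (ε := ENNReal.ofReal ε * ENNReal.ofReal ε) (mul_pos hε'.ne' hε'.ne').ne'
  refine ⟨h, hcs.uniformContinuous_of_continuous hcont, ?_⟩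
  calc μ {x | ε ≤ dist (g x) (h x)}
      ≤ μ {x | ENNReal.ofReal ε ≤ ‖g x - h x‖ₑ} := measure_mono fun x hx => by
        rw [Set.mem_ofPred_eq, ← ofReal_norm, ← dist_eq_norm]
        exact ofReal_le_ofReal hx
    _ ≤ (∫⁻ x, ‖g x - h x‖ₑ ∂μ) / ENNReal.ofReal ε :=
        meas_ge_le_lintegral_div (hg.aestronglyMeasurable.sub hcont.aestronglyMeasurable).enorm
          hε'.ne' ofReal_ne_top
    _ ≤ ENNReal.ofReal ε * ENNReal.ofReal ε / ENNReal.ofReal ε := by gcongr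
    _ = ENNReal.ofReal ε := ENNReal.mul_div_cancel_right hε'.ne' ofReal_ne_top

lemma StronglyMeasurable.exists_uniformContinuous_measure_le_dist_lt [IsFiniteMeasure μ]
    {g : X → E} (hg : StronglyMeasurable g) {ε : ℝ} (hε : 0 < ε) :
    ∃ h : X → E, UniformContinuous h ∧ μ {x | ε ≤ dist (g x) (h x)} < ENNReal.ofReal ε := by
  have hε2 : 0 < ε / 2 := half_pos hε
  have happrox : TendstoInMeasure μ (fun n => ⇑(hg.approx n)) Filter.atTop g :=
    tendstoInMeasure_of_tendsto_ae (fun n => (hg.approx n).aestronglyMeasurable)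
      (ae_of_all _ hg.tendsto_approx)
  obtain ⟨N, hN⟩ : ∃ N, μ {x | ε / 2 ≤ dist (g x) (hg.approx N x)} < ENNReal.ofReal (ε / 2) := by
    simp_rw [dist_comm (g _)]
    exact ((tendstoInMeasure_iff_dist.1 happrox (ε / 2) hε2).eventually_lt_const
      (ofReal_pos.2 hε2)).exists
  set s := hg.approx N
  obtain ⟨h, hh, hsh⟩ :=
    (s.integrable_of_isFiniteMeasure (μ := μ)).exists_uniformContinuous_measure_le_dist_le hε2
  refine ⟨h, hh, ?_⟩
  calc μ {x | ε ≤ dist (g x) (h x)} = μ {x | ε / 2 + ε / 2 ≤ dist (g x) (h x)} := by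
        rw [add_halves]
    _ ≤ μ {x | ε / 2 ≤ dist (g x) (s x)} + μ {x | ε / 2 ≤ dist (s x) (h x)} :=
        measure_le_dist_le_add g s h _ _
    _ < ENNReal.ofReal (ε / 2) + ENNReal.ofReal (ε / 2) :=
        ENNReal.add_lt_add_of_lt_of_le (hsh.trans_lt ofReal_lt_top).ne hN hsh
    _ = ENNReal.ofReal ε := by rw [← ofReal_add hε2.le hε2.le, add_halves]

end Lusin

end MeasureTheory

section AlmostEquicontinuous

variable {n : ℕ} {E : Set (EuclideanSpace ℝ (Fin n))}

lemma almostEquicontinuous_empty : AlmostEquicontinuous E ∅ :=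
  fun _ _ => ⟨1, one_pos, by simp⟩

lemma AlmostEquicontinuous.union {F G : Set (EuclideanSpace ℝ (Fin n) → ℝ)}
    (hF : AlmostEquicontinuous E F) (hG : AlmostEquicontinuous E G) :
    AlmostEquicontinuous E (F ∪ G) := by
  intro ε hε
  obtain ⟨δ₁, hδ₁, hFδ⟩ := hF ε hε
  obtain ⟨δ₂, hδ₂, hGδ⟩ := hG ε hε
  refine ⟨min δ₁ δ₂, lt_min hδ₁ hδ₂, ?_⟩
  rintro f (hf | hf)
  · obtain ⟨B, hBE, hB, hfB⟩ := hFδ f hf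
    exact ⟨B, hBE, hB, fun x₁ hx₁ x₂ hx₂ hx => hfB x₁ hx₁ x₂ hx₂ (hx.trans_le (min_le_left _ _))⟩
  · obtain ⟨B, hBE, hB, hfB⟩ := hGδ f hf
    exact ⟨B, hBE, hB, fun x₁ hx₁ x₂ hx₂ hx => hfB x₁ hx₁ x₂ hx₂ (hx.trans_le (min_le_right _ _))⟩

lemma Set.Finite.almostEquicontinuous {G : Set (EuclideanSpace ℝ (Fin n) → ℝ)} (hG : G.Finite)
    (h : ∀ g ∈ G, AlmostEquicontinuous E {g}) : AlmostEquicontinuous E G := by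
  induction G, hG using Set.Finite.induction_on with
  | empty => exact almostEquicontinuous_empty
  | @insert g G _ _ ih =>
    rw [Set.insert_eq]
    exact (h g (Set.mem_insert _ _)).union (ih fun g' hg' => h g' (Set.mem_insert_of_mem _ hg'))

lemma UniformContinuous.almostEquicontinuous_singleton {h : EuclideanSpace ℝ (Fin n) → ℝ}
    (hh : UniformContinuous h) : AlmostEquicontinuous E {h} := by
  intro ε hε
  obtain ⟨δ, hδ, hhδ⟩ := Metric.uniformContinuous_iff.1 hh ε hε
  refine ⟨δ, hδ, fun f hf => ⟨∅, Set.empty_subset _, by simpa using hε, fun x₁ _ x₂ _ hx => ?_⟩⟩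
  rw [Set.mem_singleton_iff.1 hf, ← Real.dist_eq]
  exact hhδ (by rwa [dist_eq_norm])

lemma almostEquicontinuous_of_forall_exists_measure_le_abs_lt
    {F : Set (EuclideanSpace ℝ (Fin n) → ℝ)}
    (hF : ∀ ε > (0 : ℝ), ∃ G, AlmostEquicontinuous E G ∧
      ∀ f ∈ F, ∃ g ∈ G, volume ({x | ε ≤ |f x - g x|} ∩ E) < ENNReal.ofReal ε) :
    AlmostEquicontinuous E F := by
  intro ε hε
  obtain ⟨G, hG, hFG⟩ := hF (ε / 3) (by positivity)
  obtain ⟨δ, hδ, hGδ⟩ := hG (ε / 3) (by positivity)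
  refine ⟨δ, hδ, fun f hf => ?_⟩
  obtain ⟨g, hg, hfg⟩ := hFG f hf
  obtain ⟨B, hBE, hB, hgB⟩ := hGδ g hg
  set S := {x | ε / 3 ≤ |f x - g x|} ∩ E
  refine ⟨B ∪ S, Set.union_subset hBE Set.inter_subset_right, ?_, ?_⟩
  · calc volume (B ∪ S) ≤ volume B + volume S := measure_union_le _ _
      _ < ENNReal.ofReal (ε / 3) + ENNReal.ofReal (ε / 3) := ENNReal.add_lt_add hB hfg
      _ ≤ ENNReal.ofReal ε := by
        rw [← ofReal_add (by positivity) (by positivity)]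
        exact ofReal_le_ofReal (by linarith)
  · have hclose : ∀ x ∈ E \ (B ∪ S), x ∈ E \ B ∧ |f x - g x| < ε / 3 := fun x ⟨hxE, hxBS⟩ =>
      ⟨⟨hxE, fun hxB => hxBS (.inl hxB)⟩, not_le.1 fun hx => hxBS (.inr ⟨hx, hxE⟩)⟩
    intro x₁ hx₁ x₂ hx₂ hx
    obtain ⟨hx₁B, hfg₁⟩ := hclose x₁ hx₁
    obtain ⟨hx₂B, hfg₂⟩ := hclose x₂ hx₂
    have hg₁₂ := hgB x₁ hx₁B x₂ hx₂B hx
    rw [abs_sub_lt_iff] at hfg₁ hfg₂ hg₁₂ ⊢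
    constructor <;> linarith

lemma Measurable.almostEquicontinuous_singleton {g : EuclideanSpace ℝ (Fin n) → ℝ}
    (hg : Measurable g) (hE : MeasurableSet E) (hEfin : volume E ≠ ⊤) :
    AlmostEquicontinuous E {g} := by
  have : IsFiniteMeasure (volume.restrict E) := isFiniteMeasure_restrict.2 hEfin
  refine almostEquicontinuous_of_forall_exists_measure_le_abs_lt fun ε hε => ?_
  obtain ⟨h, hh, hgh⟩ :=
    hg.stronglyMeasurable.exists_uniformContinuous_measure_le_dist_lt (μ := volume.restrict E) hε
  refine ⟨{h}, hh.almostEquicontinuous_singleton, fun f hf => ⟨h, rfl, ?_⟩⟩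
  rw [Set.mem_singleton_iff.1 hf, ← Measure.restrict_apply' hE]
  simpa only [Real.dist_eq] using hgh

end AlmostEquicontinuous

theorem almostEquicontinuous_of_totallyBounded {n : ℕ}
    (E : Set (EuclideanSpace ℝ (Fin n))) (hE : MeasurableSet E)
    (hEbd : Bornology.IsBounded E)
    (F : Set (EuclideanSpace ℝ (Fin n) → ℝ))
    (hmeas : ∀ f ∈ F, Measurable f)
    (htb : ∀ ε > (0 : ℝ), ∃ G : Set (EuclideanSpace ℝ (Fin n) → ℝ), G.Finite ∧
      (∀ g ∈ G, Measurable g) ∧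
      ∀ f ∈ F, ∃ g ∈ G,
        (∫⁻ x in E, ENNReal.ofReal (min |f x - g x| 1)) < ENNReal.ofReal ε) :
    AlmostEquicontinuous E F := by
  have hEfin : volume E ≠ ⊤ := hEbd.measure_lt_top.ne
  refine almostEquicontinuous_of_forall_exists_measure_le_abs_lt fun ε hε => ?_
  obtain ⟨G, hGfin, hGmeas, hFG⟩ := htb (min ε 1 * ε) (by positivity)
  refine ⟨G, hGfin.almostEquicontinuous fun g hg =>
    (hGmeas g hg).almostEquicontinuous_singleton hE hEfin, fun f hf => ?_⟩
  obtain ⟨g, hg, hfg⟩ := hFG f hf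
  refine ⟨g, hg, ?_⟩
  rw [← Measure.restrict_apply' hE]
  exact measure_le_abs_lt_of_lintegral_min_one_lt
    ((hmeas f hf).sub (hGmeas g hg)).aemeasurable hε hfg
end
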